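/- Suppose x̃_a ∈ F_κ and x̃_b ∈ F_κ both attain sup_{x ∈ F_κ} S(x). Then for every φ* ∈ Ψ attaining inf_{φ ∈ Ψ} D(φ), one has A_{ψ*}(x̃_a − x̃_b) = 0, where A_{ψ*} = A_o + Σ_j φ*_j A_j. In other words, two solutions of the Sion program can differ only by an element of the intersection, over all dual minimizers φ*, of the kernels of A_{ψ*}. -/

import Mathlib

open Matrix ComplexOrder Filter Set OrderDual

/-!
Sion's minimax theorem applies to the Lagrangian on `Fκ × Ψ`: `Fκ` is compact and convex,
`L φ` is concave for `φ ∈ Ψ`, and `L` is affine in `φ`. Hence `sup S = inf D`, and a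
maximizer `x̃` of `S` satisfies `D φ* ≤ S x̃ ≤ L φ* x̃ ≤ D φ*`: it maximizes the concave quadratic
`L φ*` over `Fκ`.
At the midpoint of two such maximizers `L φ*` exceeds their common value by
`¼ Re⟨x̃_a - x̃_b, A_{ψ*} (x̃_a - x̃_b)⟩`, so this nonnegative form vanishes, and since `A_{ψ*}` is
positive semidefinite, `A_{ψ*} (x̃_a - x̃_b) = 0`.

Convexity of `Fκ` comes from its compactness: if `Re⟨v, A_κ v⟩ < 0`, the ray `t • v` would
eventually lie in the bounded set `Fκ`.
-/

section QuadraticFunction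

variable {m J : Type*} [Fintype m]

def quadFun (M : Matrix m m ℂ) (s : m → ℂ) (c : ℝ) (x : m → ℂ) : ℝ :=
  2 * (star s ⬝ᵥ x).re - (star x ⬝ᵥ M *ᵥ x).re + c

variable {M : Matrix m m ℂ} {s : m → ℂ} {c : ℝ}

theorem quadFun_add (M M' : Matrix m m ℂ) (s s' : m → ℂ) (c c' : ℝ) (x : m → ℂ) :
    quadFun (M + M') (s + s') (c + c') x = quadFun M s c x + quadFun M' s' c' x := by
  simp only [quadFun, star_add, add_dotProduct, add_mulVec, dotProduct_add, Complex.add_re]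
  ring

theorem quadFun_smul (r : ℝ) (M : Matrix m m ℂ) (s : m → ℂ) (c : ℝ) (x : m → ℂ) :
    quadFun (r • M) (r • s) (r * c) x = r * quadFun M s c x := by
  simp only [quadFun, star_smul, star_trivial, smul_dotProduct, smul_mulVec, dotProduct_smul,
    Complex.smul_re, smul_eq_mul]
  ring

theorem quadFun_sum (t : Finset J) (φ : J → ℝ) (A : J → Matrix m m ℂ) (s : J → m → ℂ)
    (c : J → ℝ) (x : m → ℂ) :
    quadFun (∑ j ∈ t, φ j • A j) (∑ j ∈ t, φ j • s j) (∑ j ∈ t, φ j * c j) x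
      = ∑ j ∈ t, φ j * quadFun (A j) (s j) (c j) x := by
  induction t using Finset.cons_induction with
  | empty => simp [quadFun]
  | cons j t hj ih => simp only [Finset.sum_cons, quadFun_add, quadFun_smul, ih]

theorem quadFun_smul_add_smul {a b : ℝ} (hab : a + b = 1) (x y : m → ℂ) :
    quadFun M s c (a • x + b • y)
      = a * quadFun M s c x + b * quadFun M s c y + a * b * (star (x - y) ⬝ᵥ M *ᵥ (x - y)).re := by
  obtain rfl : b = 1 - a := by linarith
  simp only [quadFun, star_add, star_sub, star_smul, star_trivial, mulVec_add, mulVec_sub,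
    mulVec_smul, dotProduct_add, add_dotProduct, sub_dotProduct, dotProduct_sub, smul_dotProduct,
    dotProduct_smul, Complex.add_re, Complex.sub_re, Complex.smul_re, smul_eq_mul]
  ring

theorem quadFun_apply_smul (t : ℝ) (v : m → ℂ) :
    quadFun M s c (t • v) = 2 * t * (star s ⬝ᵥ v).re - t ^ 2 * (star v ⬝ᵥ M *ᵥ v).re + c := by
  simp only [quadFun, star_smul, star_trivial, mulVec_smul, smul_dotProduct, dotProduct_smul,
    Complex.smul_re, smul_eq_mul]
  ring

theorem continuous_quadFun : Continuous (quadFun M s c) := by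
  unfold quadFun
  fun_prop

theorem concaveOn_quadFun (hM : ∀ v, 0 ≤ (star v ⬝ᵥ M *ᵥ v).re) :
    ConcaveOn ℝ univ (quadFun M s c) := by
  refine ⟨convex_univ, fun x _ y _ a b ha hb hab => ?_⟩
  rw [quadFun_smul_add_smul hab, smul_eq_mul, smul_eq_mul]
  nlinarith [mul_nonneg (mul_nonneg ha hb) (hM (x - y))]

theorem re_dotProduct_mulVec_nonneg_of_isCompact (hK : IsCompact {x | 0 ≤ quadFun M s c x})
    (v : m → ℂ) : 0 ≤ (star v ⬝ᵥ M *ᵥ v).re := by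
  by_contra! hv
  have hv0 : v ≠ 0 := by rintro rfl; simp at hv
  obtain ⟨R, hR⟩ := hK.isBounded.exists_norm_le
  have hgrow : Tendsto (fun t : ℝ => quadFun M s c (t • v)) atTop atTop := by
    have hpoly : (fun t : ℝ => quadFun M s c (t • v)) = fun t =>
        t * (-(star v ⬝ᵥ M *ᵥ v).re * t + 2 * (star s ⬝ᵥ v).re) + c := by
      funext t; rw [quadFun_apply_smul]; ring
    rw [hpoly]
    exact tendsto_atTop_add_const_right _ _ (tendsto_id.atTop_mul_atTop₀
      (tendsto_atTop_add_const_right _ _ (tendsto_id.const_mul_atTop (neg_pos.2 hv))))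
  have hfar : ∀ᶠ t : ℝ in atTop, R < ‖t • v‖ := by
    simp_rw [norm_smul]
    exact (tendsto_norm_atTop_atTop.atTop_mul_const (norm_pos_iff.2 hv0)).eventually_gt_atTop R
  obtain ⟨t, hmem, hlt⟩ := ((hgrow.eventually_ge_atTop 0).and hfar).exists
  exact (hR _ hmem).not_gt hlt

theorem convex_of_isCompact_setOf_quadFun_nonneg (hK : IsCompact {x | 0 ≤ quadFun M s c x}) :
    Convex ℝ {x | 0 ≤ quadFun M s c x} := by
  simpa using
    (concaveOn_quadFun (s := s) (c := c) (re_dotProduct_mulVec_nonneg_of_isCompact hK)).convex_ge 0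

theorem Matrix.PosSemidef.mulVec_sub_eq_zero_of_isMaxOn {K : Set (m → ℂ)} (hK : Convex ℝ K)
    (hM : M.PosSemidef) {x y : m → ℂ} (hx : x ∈ K) (hy : y ∈ K)
    (hxmax : IsMaxOn (quadFun M s c) K x) (hymax : IsMaxOn (quadFun M s c) K y) :
    M *ᵥ (x - y) = 0 := by
  have hmid : (1 / 2 : ℝ) • x + (1 / 2 : ℝ) • y ∈ K :=
    hK hx hy (by norm_num) (by norm_num) (by norm_num)
  have hmid_le := isMaxOn_iff.1 hxmax _ hmid
  rw [quadFun_smul_add_smul (by norm_num)] at hmid_le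
  have hre : (star (x - y) ⬝ᵥ M *ᵥ (x - y)).re ≤ 0 := by
    linarith [isMaxOn_iff.1 hxmax _ hy, isMaxOn_iff.1 hymax _ hx]
  have hnonneg := hM.dotProduct_mulVec_nonneg (x - y)
  rw [← hM.dotProduct_mulVec_zero_iff]
  exact le_antisymm (Complex.le_def.2 ⟨hre, (Complex.le_def.1 hnonneg).2.symm⟩) hnonneg

end QuadraticFunction

theorem convex_setOf_nonneg_and_posSemidef {m J : Type*} [Fintype J] (M₀ : Matrix m m ℂ)
    (A : J → Matrix m m ℂ) :
    Convex ℝ {φ : J → ℝ | (∀ j, 0 ≤ φ j) ∧ (M₀ + ∑ j, φ j • A j).PosSemidef} := by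
  rintro φ ⟨hφ, hφM⟩ ψ ⟨hψ, hψM⟩ a b ha hb hab
  refine ⟨fun j => add_nonneg (mul_nonneg ha (hφ j)) (mul_nonneg hb (hψ j)), ?_⟩
  have hcomb : M₀ + ∑ j, (a • φ + b • ψ) j • A j
      = a • (M₀ + ∑ j, φ j • A j) + b • (M₀ + ∑ j, ψ j • A j) := by
    simp only [Pi.add_apply, Pi.smul_apply, smul_eq_mul, add_smul, mul_smul, Finset.sum_add_distrib,
      ← Finset.smul_sum]
    linear_combination (norm := module) -hab • M₀
  rw [hcomb]
  exact (hφM.smul ha).add (hψM.smul hb)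

theorem convexOn_const_add_sum_mul {J : Type*} [Fintype J] (a : ℝ) (b : J → ℝ) :
    ConvexOn ℝ univ (fun φ : J → ℝ => a + ∑ j, φ j * b j) := by
  refine ⟨convex_univ, fun φ _ ψ _ p q _ _ hpq => le_of_eq ?_⟩
  simp only [Pi.add_apply, Pi.smul_apply, smul_eq_mul, add_mul, mul_assoc, Finset.sum_add_distrib,
    ← Finset.mul_sum]
  linear_combination -a * hpq

section Minimax

variable {E V : Type*} {K : Set E} {P : Set V} {L : V → E → ℝ}

theorem IsCompact.iSup₂_coe_eq_coe_sSup_image [TopologicalSpace E] {g : E → ℝ} (hK : IsCompact K)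
    (hKne : K.Nonempty) (hg : ContinuousOn g K) : ⨆ x ∈ K, (g x : EReal) = ↑(sSup (g '' K)) := by
  obtain ⟨x₁, hx₁, hsup⟩ := hK.exists_sSup_image_eq hKne hg
  refine le_antisymm (iSup₂_le fun x hx => EReal.coe_le_coe_iff.2 ?_)
    (hsup ▸ le_iSup₂ (f := fun x _ => (g x : EReal)) x₁ hx₁)
  exact le_csSup (hK.bddAbove_image hg) (mem_image_of_mem g hx)

theorem iSup₂_iInf₂_eq_iInf₂_iSup₂_of_concaveOn_convexOn
    [TopologicalSpace E] [AddCommGroup E] [Module ℝ E] [IsTopologicalAddGroup E]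
    [ContinuousSMul ℝ E] [TopologicalSpace V] [AddCommGroup V] [Module ℝ V]
    [IsTopologicalAddGroup V] [ContinuousSMul ℝ V]
    (hKne : K.Nonempty) (hKc : Convex ℝ K) (hKk : IsCompact K) (hP : Convex ℝ P)
    (hcont : ∀ φ ∈ P, ContinuousOn (L φ) K) (hconc : ∀ φ ∈ P, ConcaveOn ℝ K (L φ))
    (hcont' : ∀ x ∈ K, ContinuousOn (fun φ => L φ x) P)
    (hconv : ∀ x ∈ K, ConvexOn ℝ P (fun φ => L φ x)) :
    ⨆ x ∈ K, ⨅ φ ∈ P, (L φ x : EReal) = ⨅ φ ∈ P, ⨆ x ∈ K, (L φ x : EReal) :=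
  -- Sion's `⨅ x ∈ X, ⨆ y ∈ Y` over a compact `X`, read in the order dual of `EReal`.
  Sion.minimax' (β := ERealᵒᵈ) (f := fun x φ => toDual (L φ x : EReal)) hKne hKc hKk
    (fun φ hφ => (continuous_coe_real_ereal.comp_continuousOn (hcont φ hφ)).upperSemicontinuousOn)
    (fun φ hφ => ((hconc φ hφ).quasiconcaveOn.monotone_comp EReal.coe_strictMono.monotone).dual)
    hP
    (fun x hx => (continuous_coe_real_ereal.comp_continuousOn (hcont' x hx)).lowerSemicontinuousOn)
    (fun x hx => ((hconv x hx).quasiconvexOn.monotone_comp EReal.coe_strictMono.monotone).dual)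

theorem isMaxOn_of_iSup₂_iInf₂_eq_iInf₂_iSup₂ {φs : V} {xm : E}
    (hsaddle : ⨆ x ∈ K, ⨅ φ ∈ P, (L φ x : EReal) = ⨅ φ ∈ P, ⨆ x ∈ K, (L φ x : EReal))
    (hxm : IsMaxOn (fun x => ⨅ φ ∈ P, (L φ x : EReal)) K xm)
    (hφs : φs ∈ P) (hφmin : IsMinOn (fun φ => ⨆ x ∈ K, (L φ x : EReal)) P φs) :
    IsMaxOn (L φs) K xm := by
  intro x hx
  refine EReal.coe_le_coe_iff.1 ?_
  calc (L φs x : EReal) ≤ ⨆ x ∈ K, (L φs x : EReal) :=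
        le_iSup₂ (f := fun x _ => (L φs x : EReal)) x hx
    _ ≤ ⨅ φ ∈ P, ⨆ x ∈ K, (L φ x : EReal) := le_iInf₂ fun φ hφ => isMinOn_iff.1 hφmin φ hφ
    _ = ⨆ x ∈ K, ⨅ φ ∈ P, (L φ x : EReal) := hsaddle.symm
    _ ≤ ⨅ φ ∈ P, (L φ xm : EReal) := iSup₂_le fun x hx => isMaxOn_iff.1 hxm x hx
    _ ≤ L φs xm := iInf₂_le φs hφs

end Minimax

theorem sion_maximizers_differ_in_kernel_general
    (n : ℕ) (J : Type) [Fintype J]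
    (Ao : Matrix (Fin n) (Fin n) ℂ) (A : J → Matrix (Fin n) (Fin n) ℂ)
    (so : Fin n → ℂ) (s : J → Fin n → ℂ) (co : ℝ) (c : J → ℝ)
    (fo : (Fin n → ℂ) → ℝ)
    (hfo : ∀ x, fo x = 2 * (star so ⬝ᵥ x).re - (star x ⬝ᵥ Ao.mulVec x).re + co)
    (f : J → (Fin n → ℂ) → ℝ)
    (hf : ∀ j x, f j x = 2 * (star (s j) ⬝ᵥ x).re - (star x ⬝ᵥ (A j).mulVec x).re + c j)
    (L : (J → ℝ) → (Fin n → ℂ) → ℝ)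
    (hL : ∀ φ x, L φ x = fo x + ∑ j, φ j * f j x)
    (Ψ : Set (J → ℝ))
    (hΨ : Ψ = {φ | (∀ j, 0 ≤ φ j) ∧ (Ao + ∑ j, φ j • A j).PosSemidef})
    (κ : J → ℝ)
    (Fκ : Set (Fin n → ℂ))
    (hFκ : Fκ = {x | 0 ≤ ∑ j, κ j * f j x})
    (hFκcpt : IsCompact Fκ)
    (D : (J → ℝ) → ℝ)
    (hD : ∀ φ, D φ = sSup ((fun x => L φ x) '' Fκ))
    (S : (Fin n → ℂ) → EReal)
    (hS : ∀ x, S x = ⨅ φ ∈ Ψ, (L φ x : EReal))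
    (xa : Fin n → ℂ) (hxa : xa ∈ Fκ) (hxamax : ∀ x ∈ Fκ, S x ≤ S xa)
    (xb : Fin n → ℂ) (hxb : xb ∈ Fκ) (hxbmax : ∀ x ∈ Fκ, S x ≤ S xb) :
    ∀ φs ∈ Ψ, (∀ φ ∈ Ψ, D φs ≤ D φ) →
      (Ao + ∑ j, φs j • A j).mulVec (xa - xb) = 0 := by
  intro φs hφs hmin
  obtain rfl : fo = quadFun Ao so co := funext hfo
  obtain rfl : f = fun j => quadFun (A j) (s j) (c j) := funext₂ hf
  obtain rfl : D = fun φ => sSup (L φ '' Fκ) := funext hD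
  obtain rfl : S = fun x => ⨅ φ ∈ Ψ, (L φ x : EReal) := funext hS
  have hLq : ∀ φ,
      L φ = quadFun (Ao + ∑ j, φ j • A j) (so + ∑ j, φ j • s j) (co + ∑ j, φ j * c j) :=
    fun φ => funext fun x => by rw [hL, quadFun_add, quadFun_sum]
  have hFκq : Fκ = {x | 0 ≤ quadFun (∑ j, κ j • A j) (∑ j, κ j • s j) (∑ j, κ j * c j) x} :=
    hFκ.trans (by simp only [quadFun_sum])
  have hFκconv : Convex ℝ Fκ := hFκq ▸ convex_of_isCompact_setOf_quadFun_nonneg (hFκq ▸ hFκcpt)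
  have hΨconv : Convex ℝ Ψ := hΨ ▸ convex_setOf_nonneg_and_posSemidef Ao A
  have hsaddle := iSup₂_iInf₂_eq_iInf₂_iSup₂_of_concaveOn_convexOn ⟨xa, hxa⟩ hFκconv hFκcpt hΨconv
    (fun φ _ => (hLq φ ▸ continuous_quadFun).continuousOn)
    (fun φ hφ => (hLq φ ▸ concaveOn_quadFun fun v => (hΨ ▸ hφ).2.re_dotProduct_nonneg v).subset
      (subset_univ _) hFκconv)
    (fun x _ => by simp only [hL]; fun_prop)
    (fun x _ => by
      simpa only [hL] using (convexOn_const_add_sum_mul _ _).subset (subset_univ _) hΨconv)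
  have hDe : ∀ φ, ⨆ x ∈ Fκ, (L φ x : EReal) = ↑(sSup (L φ '' Fκ)) := fun φ =>
    hFκcpt.iSup₂_coe_eq_coe_sSup_image ⟨xa, hxa⟩ (hLq φ ▸ continuous_quadFun).continuousOn
  have hmax : ∀ xm, (∀ x ∈ Fκ, ⨅ φ ∈ Ψ, (L φ x : EReal) ≤ ⨅ φ ∈ Ψ, (L φ xm : EReal)) →
      IsMaxOn (L φs) Fκ xm := fun xm hxm =>
    isMaxOn_of_iSup₂_iInf₂_eq_iInf₂_iSup₂ hsaddle (isMaxOn_iff.2 hxm) hφs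
      (isMinOn_iff.2 fun φ hφ => by simpa only [hDe] using EReal.coe_le_coe_iff.2 (hmin φ hφ))
  exact (hΨ ▸ hφs).2.mulVec_sub_eq_zero_of_isMaxOn hFκconv hxa hxb
    (hLq φs ▸ hmax xa hxamax) (hLq φs ▸ hmax xb hxbmax)

/-- Corollary to Lemma 2. Two maximizers of the Sion function over `Fκ`
differ only by an element of the kernel of `A_{ψ*}` for every dual minimizer `φ*`. -/
theorem sion_maximizers_differ_in_kernel
    (n : ℕ) (hn : 1 ≤ n) (J : Type) [Fintype J]
    (Ao : Matrix (Fin n) (Fin n) ℂ) (A : J → Matrix (Fin n) (Fin n) ℂ)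
    (so : Fin n → ℂ) (s : J → Fin n → ℂ) (co : ℝ) (c : J → ℝ)
    (hAo : Ao.IsHermitian) (hA : ∀ j, (A j).IsHermitian)
    (fo : (Fin n → ℂ) → ℝ)
    (hfo : ∀ x, fo x = 2 * (star so ⬝ᵥ x).re - (star x ⬝ᵥ Ao.mulVec x).re + co)
    (f : J → (Fin n → ℂ) → ℝ)
    (hf : ∀ j x, f j x = 2 * (star (s j) ⬝ᵥ x).re - (star x ⬝ᵥ (A j).mulVec x).re + c j)
    (L : (J → ℝ) → (Fin n → ℂ) → ℝ)
    (hL : ∀ φ x, L φ x = fo x + ∑ j, φ j * f j x)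
    (Ψ : Set (J → ℝ))
    (hΨ : Ψ = {φ | (∀ j, 0 ≤ φ j) ∧ (Ao + ∑ j, φ j • A j).PosSemidef})
    (hΨne : Ψ.Nonempty)
    (κ : J → ℝ) (hκ : ∀ j, 0 ≤ κ j)
    (Fκ : Set (Fin n → ℂ))
    (hFκ : Fκ = {x | 0 ≤ ∑ j, κ j * f j x})
    (hFκne : Fκ.Nonempty) (hFκcpt : IsCompact Fκ)
    (D : (J → ℝ) → ℝ)
    (hD : ∀ φ, D φ = sSup ((fun x => L φ x) '' Fκ))
    (S : (Fin n → ℂ) → EReal)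
    (hS : ∀ x, S x = ⨅ φ ∈ Ψ, (L φ x : EReal))
    (xa : Fin n → ℂ) (hxa : xa ∈ Fκ) (hxamax : ∀ x ∈ Fκ, S x ≤ S xa)
    (xb : Fin n → ℂ) (hxb : xb ∈ Fκ) (hxbmax : ∀ x ∈ Fκ, S x ≤ S xb) :
    ∀ φs ∈ Ψ, (∀ φ ∈ Ψ, D φs ≤ D φ) →
      (Ao + ∑ j, φs j • A j).mulVec (xa - xb) = 0 :=
  sion_maximizers_differ_in_kernel_general n J Ao A so s co c fo hfo f hf L hL Ψ hΨ κ Fκ hFκ hFκcpt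
    D hD S hS xa hxa hxamax xb hxb hxbmax
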